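/- Let z(ζ) = (Δ(ζ) + √(Δ(ζ)² − 4))/2 where Δ is analytic near a real point x₀ with |Δ(x₀)| < 2 and Δ'(x₀) ≠ 0. Then ∂/∂y |ln|z(x + iy)|| at (x₀, 0) equals −Im(Δ'(x₀)/√(Δ(x₀)² − 4)), and this quantity is nonzero. -/

import Mathlib

/-!
On the vertical line `ζ = x₀ + iy` one has `log ‖z‖ = Re (log z)` (after replacing `z` by `-z`
if necessary), so the `y`-derivative is `Re (i z'/z) = -Im (z'/z)`. Differentiating
`s² = Δ² - 4` gives `s' = Δ Δ' / s`, hence `z'/z = Δ'/s`. This is non-real because `Δ'(x₀)` is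
real and nonzero while `s(x₀)` is not real.
-/

open Complex Topology

theorem HasDerivAt.log_norm_comp_vertical_of_mem_slitPlane {f : ℂ → ℂ} {f' z : ℂ}
    (hf : HasDerivAt f f' z) (hz : f z ∈ slitPlane) :
    HasDerivAt (fun y : ℝ => Real.log ‖f (z + y * I)‖) (-(f' / f z).im) 0 := by
  have hline : HasDerivAt (fun ζ : ℂ => z + ζ * I) I 0 := by
    simpa using ((hasDerivAt_id (0 : ℂ)).mul_const I).const_add z
  have hf_line : HasDerivAt (fun ζ : ℂ => f (z + ζ * I)) (f' * I) 0 := by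
    refine HasDerivAt.comp (h₂ := f) 0 ?_ hline
    simpa using hf
  have hlog := (hf_line.clog (by simpa using hz)).real_of_complex
  simpa [log_re, mul_div_right_comm] using hlog

theorem HasDerivAt.log_norm_comp_vertical {f : ℂ → ℂ} {f' z : ℂ}
    (hf : HasDerivAt f f' z) (hz : f z ≠ 0) :
    HasDerivAt (fun y : ℝ => Real.log ‖f (z + y * I)‖) (-(f' / f z).im) 0 := by
  rcases mem_slitPlane_or_neg_mem_slitPlane hz with hz | hz
  · exact hf.log_norm_comp_vertical_of_mem_slitPlane hz
  · simpa using hf.neg.log_norm_comp_vertical_of_mem_slitPlane hz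

theorem HasDerivAt.eq_mul_div_of_sq_eventuallyEq {s Δ : ℂ → ℂ} {S' D' x c : ℂ}
    (hs : HasDerivAt s S' x) (hΔ : HasDerivAt Δ D' x)
    (hsq : ∀ᶠ ζ in 𝓝 x, s ζ ^ 2 = Δ ζ ^ 2 - c) (hs0 : s x ≠ 0) :
    S' = Δ x * D' / s x := by
  have hsq' : HasDerivAt (fun ζ => s ζ ^ 2) (2 * Δ x * D') x := by
    simpa [mul_assoc] using ((hΔ.pow 2).sub_const c).congr_of_eventuallyEq hsq
  have := (hs.pow 2).unique hsq'
  rw [eq_div_iff hs0]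
  linear_combination (1 / 2 : ℂ) * this

theorem add_mul_div_div_add {K : Type*} [Field K] {a b c : K} (hb : b ≠ 0) (hab : a + b ≠ 0) :
    (c + a * c / b) / (a + b) = c / b := by
  field_simp
  ring

theorem Complex.im_div_ne_zero_of_im_eq_zero {a b : ℂ} (ha : a.im = 0) (ha0 : a ≠ 0)
    (hb : b.im ≠ 0) :
    (a / b).im ≠ 0 := by
  have hre : a.re ≠ 0 := fun h => ha0 (Complex.ext h ha)
  rw [div_im, ha, zero_mul, zero_div, zero_sub, neg_ne_zero]
  exact div_ne_zero (mul_ne_zero hre hb) (normSq_pos.mpr (fun h => hb (by simp [h]))).ne'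

theorem normal_derivative_log_abs_eigenvalue_general
    (Δ : ℂ → ℂ) (x₀ : ℝ)
    (hΔ_an : AnalyticAt ℂ Δ (x₀ : ℂ))
    (hΔ_real : (Δ (x₀ : ℂ)).im = 0)
    (hΔ'_real : (deriv Δ (x₀ : ℂ)).im = 0)
    (hΔ' : deriv Δ (x₀ : ℂ) ≠ 0)
    (s : ℂ → ℂ) (hs_an : AnalyticAt ℂ s (x₀ : ℂ))
    (hs_branch : ∀ᶠ ζ in nhds (x₀ : ℂ), s ζ ^ 2 = Δ ζ ^ 2 - 4)
    (hs_sign : 0 < (s (x₀ : ℂ)).im) :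
    deriv (fun y : ℝ =>
        Real.log ‖(Δ ((x₀ : ℂ) + y * Complex.I)
          + s ((x₀ : ℂ) + y * Complex.I)) / 2‖) 0
      = -(deriv Δ (x₀ : ℂ) / s (x₀ : ℂ)).im ∧
    -(deriv Δ (x₀ : ℂ) / s (x₀ : ℂ)).im ≠ 0 := by
  have hΔd := hΔ_an.differentiableAt.hasDerivAt
  have hsd := hs_an.differentiableAt.hasDerivAt
  have hs0 : s x₀ ≠ 0 := fun h => hs_sign.ne' (by simp [h])
  have hz0 : Δ x₀ + s x₀ ≠ 0 := fun h => hs_sign.ne' (by simpa [hΔ_real] using congrArg im h)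
  rw [hsd.eq_mul_div_of_sq_eventuallyEq hΔd hs_branch hs0] at hsd
  have hlog := ((hΔd.fun_add hsd).div_const 2).log_norm_comp_vertical (div_ne_zero hz0 two_ne_zero)
  rw [div_div_div_cancel_right₀ two_ne_zero, add_mul_div_div_add hs0 hz0] at hlog
  exact ⟨hlog.deriv, neg_ne_zero.mpr (im_div_ne_zero_of_im_eq_zero hΔ'_real hΔ' hs_sign.ne')⟩

/-- The normal derivative of ln|z(x+iy)| at a real point x₀ where |Δ(x₀)| < 2 and
Δ'(x₀) ≠ 0: it equals −Im(Δ'(x₀)/√(Δ(x₀)² − 4)) and is nonzero. Here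
z = (Δ + √(Δ² − 4))/2 with s = √(Δ² − 4) an analytic branch of the square root. -/
theorem normal_derivative_log_abs_eigenvalue
    (Δ : ℂ → ℂ) (x₀ : ℝ)
    (hΔ_an : AnalyticAt ℂ Δ (x₀ : ℂ))
    (hΔ_real : (Δ (x₀ : ℂ)).im = 0)
    (hΔ'_real : (deriv Δ (x₀ : ℂ)).im = 0)
    (hΔ_lt : ‖Δ (x₀ : ℂ)‖ < 2)
    (hΔ' : deriv Δ (x₀ : ℂ) ≠ 0)
    (s : ℂ → ℂ) (hs_an : AnalyticAt ℂ s (x₀ : ℂ))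
    (hs_branch : ∀ᶠ ζ in nhds (x₀ : ℂ), s ζ ^ 2 = Δ ζ ^ 2 - 4)
    (hs_sign : 0 < (s (x₀ : ℂ)).im) :
    deriv (fun y : ℝ =>
        Real.log ‖(Δ ((x₀ : ℂ) + y * Complex.I)
          + s ((x₀ : ℂ) + y * Complex.I)) / 2‖) 0
      = -(deriv Δ (x₀ : ℂ) / s (x₀ : ℂ)).im ∧
    -(deriv Δ (x₀ : ℂ) / s (x₀ : ℂ)).im ≠ 0 :=
  normal_derivative_log_abs_eigenvalue_general Δ x₀ hΔ_an hΔ_real hΔ'_real hΔ' s hs_an hs_branch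
    hs_sign
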